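/- Under the conditions that each vertex has a self-loop, is influenced by at most one other vertex, and its incoming influence weights sum to 1, the gossip relation is contained in the hybrid relation: every gossip transition Γ →_gossip Γ' (updating one agent along one edge) is also a hybrid transition Γ →_hybrid Γ'. -/
import Mathlib


/-- The update function `μ(Γ, A, u)`: incremental weighted-average update of agent `u`
using the edges of `A` incident to `u`; the opinion is unchanged when the total
incoming weight is zero. -/
noncomputable def mu {V : Type*} [DecidableEq V] (o : V → ℝ) (w : V × V → ℝ)
    (A : Finset (V × V)) (u : V) : ℝ :=
  let inc := A.filter (fun e => e.2 = u)
  let S := ∑ e ∈ inc, w e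
  if S ≠ 0 then o u + ∑ e ∈ inc, (o e.1 - o u) * (w e / S) else o u

/-- Gossip is contained in hybrid when each vertex has a self-loop, is influenced by at
most one other vertex, and its incoming weights sum to 1. -/
theorem gossip_subset_hybrid {V : Type*} [DecidableEq V] [Fintype V]
    (E : Finset (V × V)) (w : V × V → ℝ) (o o' : V → ℝ)
    (hw : ∀ e ∈ E, w e ∈ Set.Icc (0:ℝ) 1)
    (hself : ∀ u : V, (u, u) ∈ E)
    (hone : ∀ u v v' : V, (v, u) ∈ E → (v', u) ∈ E → v ≠ u → v' ≠ u → v = v')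
    (hsum : ∀ u : V, ∑ e ∈ E.filter (fun e => e.2 = u), w e = 1)
    (hgossip : ∃ e ∈ E,
      o' = Function.update o e.2 (o e.2 + (o e.1 - o e.2) * w e)) :
    ∃ A ⊆ E, A.Nonempty ∧ ∀ u, o' u = mu o w A u := by
  
  obtain ⟨⟨v, u⟩, heE, ho'⟩ := hgossip
  simp only at ho'
  refine ⟨insert (v,u) {(u,u)}, ?_, ⟨(v,u), Finset.mem_insert_self _ _⟩, ?_⟩
  · intro x hx
    rcases Finset.mem_insert.1 hx with h | h
    · exact h ▸ heE
    · exact (Finset.mem_singleton.1 h) ▸ hself u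
  · intro x
    by_cases hx : x = u
    · subst hx
      have hinc : (insert (v,x) ({(x,x)} : Finset (V×V))).filter (fun e => e.2 = x)
          = insert (v,x) {(x,x)} := by
        apply Finset.filter_true_of_mem
        intro e he
        rcases Finset.mem_insert.1 he with h|h
        · subst h; rfl
        · rw [Finset.mem_singleton.1 h]
      by_cases hv : v = x
      · subst hv
        simp only [ho', Function.update_self, mu, hinc, Finset.insert_idem,
          Finset.sum_singleton]
        simp
      · have hA : E.filter (fun e => e.2 = x) = insert (v,x) {(x,x)} := by
          apply Finset.Subset.antisymm
          · intro e he
            obtain ⟨heE', he2⟩ := Finset.mem_filter.1 he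
            obtain ⟨a, b⟩ := e
            simp only at he2
            rw [he2] at heE' ⊢
            by_cases ha : a = x
            · subst ha; simp
            · have := hone x v a heE heE' hv ha
              subst this; simp
          · intro e he
            rcases Finset.mem_insert.1 he with h|h
            · subst h; exact Finset.mem_filter.2 ⟨heE, rfl⟩
            · rw [Finset.mem_singleton.1 h]
              exact Finset.mem_filter.2 ⟨hself x, rfl⟩
        have hS : ∑ e ∈ insert (v,x) ({(x,x)} : Finset (V×V)), w e = 1 := by
          rw [← hA]; exact hsum x
        have hvm : ((v,x) : V × V) ∉ ({(x,x)} : Finset (V×V)) := by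
          simp [hv]
        simp only [mu, hinc, hS, Finset.sum_insert hvm, Finset.sum_singleton,
          ho', Function.update_self]
        norm_num
    · have hinc : (insert (v,u) ({(u,u)} : Finset (V×V))).filter (fun e => e.2 = x)
          = ∅ := by
        apply Finset.filter_eq_empty_iff.2
        intro e he
        rcases Finset.mem_insert.1 he with h|h
        · subst h; simpa using fun h => hx h.symm
        · rw [Finset.mem_singleton.1 h]; simpa using fun h => hx h.symm
      simp [mu, hinc, ho', Function.update_of_ne hx]
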